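/- Let (X_n) be a Markov chain on Ω, f : Ω → [0,∞) measurable, and K = {f ≤ R₀}. Suppose there are integrable real random variables Z₀ and Z₁ with E[Z₁] = −λ₁ < 0 such that the increment f(X₁) − f(X₀) conditioned on X₀ = x is stochastically dominated by Z₀ for x ∈ K and by Z₁ for x ∉ K. Then, with τ = inf{n ≥ 1 : X_n ∈ K} the first return time to K, the series Σ_{n≥1} sup_{x∈K} P_x(τ ≥ n) converges. -/

import Mathlib

/-!
Outside `K` the increments of `f(Xₙ)` are dominated by `Z₁`, so by induction on `n` the
probability of staying above `R₀` for `n` steps is at most the probability that the random walk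
with step law `Z₁` stays positive for `n` steps. As `E[Z₁] < 0`, the truncated step `max Z₁ (-c)`
still has mean `≤ -δ < 0` for some `c`, which makes `b ↦ (b + c) / δ` a Lyapunov function for the
killed walk: the expected number of steps it survives from `b > 0` is at most `(b + c) / δ`.
From `x ∈ K` the first step is dominated by `Z₀`, and integrating that bound against the
integrable `Z₀` gives a summable majorant uniform in `x ∈ K`.
-/

open MeasureTheory Set Filter
open scoped ENNReal Topology

/-- Markov chain family: see the paper, Section 2. -/
def IsMarkovChainFamily {Ω : Type*} [MeasurableSpace Ω] (P : Ω → Measure (ℕ → Ω)) : Prop :=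
  (∀ x, IsProbabilityMeasure (P x)) ∧
  (∀ x, P x {ω | ω 0 = x} = 1) ∧
  (∀ (x : Ω) (n : ℕ) (B : Set (ℕ → Ω)), MeasurableSet B →
    ∀ C : Set (ℕ → Ω), MeasurableSet C →
      (∀ ω ω' : ℕ → Ω, (∀ k ≤ n, ω k = ω' k) → (ω ∈ C ↔ ω' ∈ C)) →
      P x (C ∩ {ω | (fun k => ω (n + k)) ∈ B}) = ∫⁻ ω in C, P (ω n) B ∂ P x)

section StochasticDominance

variable {α : Type*} [MeasurableSpace α] {μ : Measure α} {ν : Measure ℝ} [IsFiniteMeasure ν]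
  {h : α → ℝ}

lemma measure_le_le_measure_Ici_of_tail_le (hdom : ∀ t, μ {w | t < h w} ≤ ν (Ioi t)) (c : ℝ) :
    μ {w | c ≤ h w} ≤ ν (Ici c) := by
  have hIci : ⋂ r > (0 : ℝ), Ioi (c - r) = Ici c := by
    ext y
    simp only [mem_iInter, mem_Ioi, mem_Ici]
    refine ⟨fun hy => le_of_forall_pos_lt_add fun r hr => ?_, fun hy r hr => by linarith⟩
    linarith [hy r hr]
  have hlim := tendsto_measure_biInter_gt (μ := ν) (s := fun r => Ioi (c - r)) (a := 0)
    (fun _ _ => measurableSet_Ioi.nullMeasurableSet)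
    (fun _ _ _ hij => Ioi_subset_Ioi (by linarith)) ⟨1, one_pos, measure_ne_top _ _⟩
  rw [hIci] at hlim
  refine ge_of_tendsto hlim ?_
  filter_upwards [self_mem_nhdsWithin] with r (hr : 0 < r)
  exact (measure_mono fun w (hw : c ≤ h w) => show c - r < h w by linarith).trans (hdom _)

lemma measure_preimage_le_of_isUpperSet (hdom : ∀ t, μ {w | t < h w} ≤ ν (Ioi t))
    {U : Set ℝ} (hU : IsUpperSet U) : μ (h ⁻¹' U) ≤ ν U := by
  rcases U.eq_empty_or_nonempty with rfl | hne
  · simp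
  by_cases hb : BddBelow U
  · have hglb := isGLB_csInf hne hb
    by_cases hmem : sInf U ∈ U
    · have hU_eq : U = Ici (sInf U) :=
        Subset.antisymm (fun u hu => hglb.1 hu) (hU.Ici_subset hmem)
      rw [hU_eq]
      exact measure_le_le_measure_Ici_of_tail_le hdom _
    · have hU_eq : U = Ioi (sInf U) := by
        refine Subset.antisymm (fun u hu => lt_of_le_of_ne (hglb.1 hu) ?_) fun z hz => ?_
        · rintro rfl
          exact hmem hu
        · obtain ⟨u, hu, -, huz⟩ := hglb.exists_between hz
          exact hU huz.le hu
      rw [hU_eq]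
      exact hdom _
  · have hU_eq : U = univ := eq_univ_of_forall fun y => by
      obtain ⟨u, hu, huy⟩ := not_bddBelow_iff.1 hb y
      exact hU huy.le hu
    have hunion : (univ : Set α) = ⋃ n : ℕ, {w | -(n : ℝ) < h w} :=
      (iUnion_eq_univ_iff.2 fun w =>
        let ⟨n, hn⟩ := exists_nat_gt (-h w); ⟨n, show -(n : ℝ) < h w by linarith⟩).symm
    rw [hU_eq, preimage_univ, hunion, Monotone.measure_iUnion]
    · exact iSup_le fun n => (hdom _).trans (measure_mono (subset_univ _))
    · intro m n hmn w (hw : -(m : ℝ) < h w)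
      show -(n : ℝ) < h w
      have : (m : ℝ) ≤ n := Nat.cast_le.2 hmn
      linarith

lemma lintegral_comp_le_of_tail_le (hh : Measurable h)
    (hdom : ∀ t, μ {w | t < h w} ≤ ν (Ioi t)) {g : ℝ → ℝ≥0∞} (hg : Monotone g)
    (hgm : Measurable g) (hg_top : ∀ y, g y ≠ ∞) :
    ∫⁻ w, g (h w) ∂μ ≤ ∫⁻ y, g y ∂ν := by
  set G : ℝ → ℝ := fun y => (g y).toReal
  have hG : ∀ y, ENNReal.ofReal (G y) = g y := fun y => ENNReal.ofReal_toReal (hg_top y)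
  have hGm : Measurable G := hgm.ennreal_toReal
  have hG0 : ∀ y, 0 ≤ G y := fun _ => ENNReal.toReal_nonneg
  simp only [← hG]
  rw [lintegral_eq_lintegral_meas_lt μ (.of_forall fun w => hG0 (h w))
      (hGm.comp hh).aemeasurable,
    lintegral_eq_lintegral_meas_lt ν (.of_forall hG0) hGm.aemeasurable]
  refine lintegral_mono fun t => measure_preimage_le_of_isUpperSet (h := h) hdom
    (U := {y | t < G y}) fun a b hab ha => ?_
  exact ha.trans_le (ENNReal.toReal_mono (hg_top b) (hg hab))

end StochasticDominance

lemma IsUpperSet.monotone_indicator {α : Type*} [Preorder α] {s : Set α} (hs : IsUpperSet s)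
    {g : α → ℝ≥0∞} (hg : Monotone g) : Monotone (s.indicator g) := by
  intro a b hab
  by_cases ha : a ∈ s
  · rw [indicator_of_mem ha, indicator_of_mem (hs hab ha)]
    exact hg hab
  · rw [indicator_of_notMem ha]
    exact bot_le

/-- `walkSurvival ζ n b` is the probability that the random walk with step law `ζ` started at `b`
stays positive at times `0, …, n`. -/
noncomputable def walkSurvival (ζ : Measure ℝ) : ℕ → ℝ → ℝ≥0∞
  | 0 => (Ioi 0).indicator 1
  | n + 1 => (Ioi 0).indicator fun b => ∫⁻ z, walkSurvival ζ n (b + z) ∂ζ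

namespace walkSurvival

variable {ζ : Measure ℝ}

lemma of_nonpos (n : ℕ) {b : ℝ} (hb : b ≤ 0) : walkSurvival ζ n b = 0 := by
  cases n <;> exact indicator_of_notMem (notMem_Ioi.2 hb) _

lemma zero_of_pos {b : ℝ} (hb : 0 < b) : walkSurvival ζ 0 b = 1 :=
  indicator_of_mem (mem_Ioi.2 hb) _

lemma succ_of_pos (n : ℕ) {b : ℝ} (hb : 0 < b) :
    walkSurvival ζ (n + 1) b = ∫⁻ z, walkSurvival ζ n (b + z) ∂ζ :=
  indicator_of_mem (mem_Ioi.2 hb) _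

lemma monotone (n : ℕ) : Monotone (walkSurvival ζ n) := by
  induction n with
  | zero => exact (isUpperSet_Ioi 0).monotone_indicator monotone_const
  | succ n ih =>
    exact (isUpperSet_Ioi 0).monotone_indicator fun a b hab =>
      lintegral_mono fun z => ih (by linarith)

lemma measurable [SFinite ζ] (n : ℕ) : Measurable (walkSurvival ζ n) := by
  induction n with
  | zero => exact measurable_const.indicator measurableSet_Ioi
  | succ n ih =>
    exact ((ih.comp measurable_add).lintegral_prod_right').indicator measurableSet_Ioi

lemma le_one [IsProbabilityMeasure ζ] (n : ℕ) (b : ℝ) : walkSurvival ζ n b ≤ 1 := by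
  induction n generalizing b with
  | zero => exact indicator_le_self' (fun _ _ => bot_le) b
  | succ n ih =>
    refine indicator_le_self' (fun _ _ => bot_le) b |>.trans ?_
    calc ∫⁻ z, walkSurvival ζ n (b + z) ∂ζ ≤ ∫⁻ _, 1 ∂ζ := lintegral_mono fun z => ih _
      _ = 1 := by simp

lemma ne_top [IsProbabilityMeasure ζ] (n : ℕ) (b : ℝ) : walkSurvival ζ n b ≠ ∞ :=
  ((le_one n b).trans_lt ENNReal.one_lt_top).ne

end walkSurvival

lemma exists_integral_max_neg_lt {ζ : Measure ℝ} (hint : Integrable id ζ) {m : ℝ}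
    (hm : ∫ z, z ∂ζ < m) : ∃ c : ℝ, ∫ z, max z (-c) ∂ζ < m := by
  have hlim : Tendsto (fun n : ℕ => ∫ z, max z (-(n : ℝ)) ∂ζ) atTop (𝓝 (∫ z, z ∂ζ)) := by
    refine tendsto_integral_of_dominated_convergence (fun z => |z|)
      (fun n => (measurable_id.max measurable_const).aestronglyMeasurable) hint.abs
      (fun n => .of_forall fun z => ?_) (.of_forall fun z => ?_)
    · rw [Real.norm_eq_abs, abs_le]
      constructor <;> cases abs_cases z <;> cases max_cases z (-(n : ℝ)) <;>
        linarith [Nat.cast_nonneg (α := ℝ) n]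
    · refine tendsto_const_nhds.congr' ?_
      filter_upwards [eventually_ge_atTop ⌈-z⌉₊] with n hn
      exact (max_eq_left (by linarith [Nat.ceil_le.1 hn])).symm
  obtain ⟨n, hn⟩ := (hlim.eventually (gt_mem_nhds hm)).exists
  exact ⟨n, hn⟩

section Drift

variable {ζ : Measure ℝ} [IsProbabilityMeasure ζ] {c δ : ℝ}

/-- Drift criterion: `b ↦ (b + c) / δ` is a Lyapunov function for the walk killed at `(-∞, 0]`. -/
lemma sum_range_walkSurvival_le (hδ : 0 < δ) (hint : Integrable id ζ)
    (hdrift : ∫ z, max z (-c) ∂ζ ≤ -δ) (N : ℕ) (b : ℝ) :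
    ∑ n ∈ Finset.range N, walkSurvival ζ n b ≤ ENNReal.ofReal ((b + c) / δ) := by
  induction N generalizing b with
  | zero => simp
  | succ N ih =>
    rcases le_or_gt b 0 with hb | hb
    · simp [walkSurvival.of_nonpos _ hb]
    have hmax : Integrable (fun z => max z (-c)) ζ := hint.sup (integrable_const _)
    have hcδ : δ ≤ c := by
      have : -c ≤ ∫ z, max z (-c) ∂ζ := by
        simpa using integral_mono (integrable_const (-c)) hmax fun z => le_max_right z (-c)
      linarith
    have hone : 1 ≤ (b + c) / δ := by rw [one_le_div hδ]; linarith
    have hV : Integrable (fun z => (b + c + max z (-c)) / δ) ζ :=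
      ((integrable_const _).add hmax).div_const _
    have hV_int : ∫ z, (b + c + max z (-c)) / δ ∂ζ ≤ (b + c) / δ - 1 := by
      rw [integral_div, integral_add (integrable_const _) hmax, integral_const]
      simp only [probReal_univ, one_smul]
      rw [div_le_iff₀ hδ, sub_mul, div_mul_cancel₀ _ hδ.ne']
      linarith
    rw [Finset.sum_range_succ', walkSurvival.zero_of_pos hb]
    simp only [walkSurvival.succ_of_pos _ hb]
    calc ∑ n ∈ Finset.range N, ∫⁻ z, walkSurvival ζ n (b + z) ∂ζ + 1
        = ∫⁻ z, ∑ n ∈ Finset.range N, walkSurvival ζ n (b + z) ∂ζ + 1 := by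
          congr 1
          exact (lintegral_finsetSum _ fun n _ =>
            (walkSurvival.measurable n).comp (measurable_const_add b)).symm
      _ ≤ ∫⁻ z, ENNReal.ofReal ((b + c + max z (-c)) / δ) ∂ζ + 1 := by
          gcongr with z
          exact (ih _).trans (ENNReal.ofReal_le_ofReal
            (div_le_div_of_nonneg_right (by linarith [le_max_left z (-c)]) hδ.le))
      _ = ENNReal.ofReal (∫ z, (b + c + max z (-c)) / δ ∂ζ) + 1 := by
          rw [ofReal_integral_eq_lintegral_ofReal hV (.of_forall fun z => ?_)]
          have := le_max_right z (-c)
          exact div_nonneg (by linarith) hδ.le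
      _ ≤ ENNReal.ofReal ((b + c) / δ - 1) + 1 := by gcongr
      _ = ENNReal.ofReal ((b + c) / δ) := by
          rw [← ENNReal.ofReal_one, ← ENNReal.ofReal_add (by linarith) zero_le_one, sub_add_cancel]

lemma tsum_walkSurvival_le (hδ : 0 < δ) (hint : Integrable id ζ)
    (hdrift : ∫ z, max z (-c) ∂ζ ≤ -δ) (b : ℝ) :
    ∑' n, walkSurvival ζ n b ≤ ENNReal.ofReal ((b + c) / δ) :=
  ENNReal.tsum_le_of_sum_range_le fun N => sum_range_walkSurvival_le hδ hint hdrift N b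

lemma tsum_lintegral_walkSurvival_lt_top (hδ : 0 < δ) (hint : Integrable id ζ)
    (hdrift : ∫ z, max z (-c) ∂ζ ≤ -δ) {ζ₀ : Measure ℝ} [IsFiniteMeasure ζ₀]
    (hint₀ : Integrable id ζ₀) :
    ∑' n, ∫⁻ z, walkSurvival ζ n z ∂ζ₀ < ∞ := by
  rw [← lintegral_tsum fun n => (walkSurvival.measurable n).aemeasurable]
  calc ∫⁻ z, ∑' n, walkSurvival ζ n z ∂ζ₀ ≤ ∫⁻ z, ENNReal.ofReal ((z + c) / δ) ∂ζ₀ :=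
        lintegral_mono fun z => tsum_walkSurvival_le hδ hint hdrift z
    _ < ∞ := ((hint₀.add (integrable_const c)).div_const δ).lintegral_lt_top

end Drift

section MarkovChain

variable {Ω : Type*} {f : Ω → ℝ} {R₀ : ℝ}

/-- The event `τ > n`, for `τ` the first return time to `K = {f ≤ R₀}`. -/
def staysAbove (f : Ω → ℝ) (R₀ : ℝ) (n : ℕ) : Set (ℕ → Ω) :=
  {ω | ∀ k, 1 ≤ k → k ≤ n → R₀ < f (ω k)}

lemma staysAbove_zero : staysAbove f R₀ 0 = univ :=
  eq_univ_of_forall fun _ _ h1 h0 => absurd (h1.trans h0) (by omega)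

lemma staysAbove_succ (n : ℕ) :
    staysAbove f R₀ (n + 1) =
      {ω | R₀ < f (ω 1)} ∩ {ω | (fun k => ω (1 + k)) ∈ staysAbove f R₀ n} := by
  ext ω
  refine ⟨fun h => ⟨h 1 le_rfl (by omega), fun k hk hkn => h (1 + k) (by omega) (by omega)⟩, ?_⟩
  rintro ⟨h1, h⟩ k hk hkn
  obtain ⟨j, rfl⟩ := Nat.exists_eq_add_of_le hk
  rcases j.eq_zero_or_pos with rfl | hj
  · exact h1
  · exact h j hj (by omega)

variable [MeasurableSpace Ω] {P : Ω → Measure (ℕ → Ω)}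

lemma measurableSet_staysAbove (hf : Measurable f) (n : ℕ) :
    MeasurableSet (staysAbove f R₀ n) := by
  simp only [staysAbove, ofPred_forall]
  exact .iInter fun k => .iInter fun _ => .iInter fun _ =>
    measurableSet_lt measurable_const (hf.comp (measurable_pi_apply k))

lemma measure_staysAbove_succ_le (hP : IsMarkovChainFamily P) (hf : Measurable f)
    {ζ : Measure ℝ} [IsFiniteMeasure ζ] {x : Ω}
    (hdom : ∀ t, P x {ω | t < f (ω 1) - f x} ≤ ζ (Ioi t)) {S : ℝ → ℝ≥0∞} (hS : Monotone S)
    (hSm : Measurable S) (hS_top : ∀ b, S b ≠ ∞) {n : ℕ}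
    (hn : ∀ y, R₀ < f y → P y (staysAbove f R₀ n) ≤ S (f y - R₀)) :
    P x (staysAbove f R₀ (n + 1)) ≤ ∫⁻ z, S (f x - R₀ + z) ∂ζ := by
  have hC : MeasurableSet {ω : ℕ → Ω | R₀ < f (ω 1)} :=
    measurableSet_lt measurable_const (hf.comp (measurable_pi_apply 1))
  rw [staysAbove_succ, hP.2.2 x 1 _ (measurableSet_staysAbove hf n) _ hC
    fun ω ω' h => by simp only [mem_ofPred_eq, h 1 le_rfl]]
  calc ∫⁻ ω in {ω | R₀ < f (ω 1)}, P (ω 1) (staysAbove f R₀ n) ∂P x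
      ≤ ∫⁻ ω in {ω | R₀ < f (ω 1)}, S (f x - R₀ + (f (ω 1) - f x)) ∂P x :=
        setLIntegral_mono' hC fun ω hω => by
          rw [sub_add_sub_cancel']
          exact hn _ hω
    _ ≤ ∫⁻ ω, S (f x - R₀ + (f (ω 1) - f x)) ∂P x := setLIntegral_le_lintegral _ _
    _ ≤ ∫⁻ z, S (f x - R₀ + z) ∂ζ :=
        lintegral_comp_le_of_tail_le ((hf.comp (measurable_pi_apply 1)).sub_const _) hdom
          (fun _ _ h => hS (by linarith)) (hSm.comp (measurable_const_add _)) fun _ => hS_top _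

lemma measure_staysAbove_le_walkSurvival (hP : IsMarkovChainFamily P) (hf : Measurable f)
    {ζ : Measure ℝ} [IsProbabilityMeasure ζ]
    (hdom : ∀ x, R₀ < f x → ∀ t, P x {ω | t < f (ω 1) - f x} ≤ ζ (Ioi t)) (n : ℕ) {y : Ω}
    (hy : R₀ < f y) : P y (staysAbove f R₀ n) ≤ walkSurvival ζ n (f y - R₀) := by
  induction n generalizing y with
  | zero =>
    have := hP.1 y
    rw [staysAbove_zero, measure_univ, walkSurvival.zero_of_pos (sub_pos.2 hy)]
  | succ n ih =>
    rw [walkSurvival.succ_of_pos n (sub_pos.2 hy)]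
    exact measure_staysAbove_succ_le hP hf (hdom y hy) (walkSurvival.monotone n)
      (walkSurvival.measurable n) (walkSurvival.ne_top n) fun _ => ih

end MarkovChain

theorem stmt5 {Ω : Type*} [MeasurableSpace Ω] (P : Ω → Measure (ℕ → Ω))
    (hP : IsMarkovChainFamily P)
    (f : Ω → ℝ) (hf : Measurable f) (R₀ : ℝ)
    (ζ₀ ζ₁ : Measure ℝ) [IsProbabilityMeasure ζ₀] [IsProbabilityMeasure ζ₁]
    (h0int : Integrable id ζ₀) (h1int : Integrable id ζ₁)
    (lam₁ : ℝ) (hlam₁ : 0 < lam₁) (hmean : ∫ z, z ∂ζ₁ = -lam₁)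
    (hdom0 : ∀ x, f x ≤ R₀ → ∀ t : ℝ, P x {ω | t < f (ω 1) - f x} ≤ ζ₀ (Ioi t))
    (hdom1 : ∀ x, R₀ < f x → ∀ t : ℝ, P x {ω | t < f (ω 1) - f x} ≤ ζ₁ (Ioi t)) :
    (∑' n : ℕ, ⨆ x ∈ {y | f y ≤ R₀}, P x {ω | ∀ k, 1 ≤ k → k < n → R₀ < f (ω k)}) < ⊤ := by
  obtain ⟨c, hc⟩ := exists_integral_max_neg_lt h1int (m := -(lam₁ / 2)) (by linarith)
  have hle_one (n : ℕ) :
      ⨆ x ∈ {y | f y ≤ R₀}, P x {ω | ∀ k, 1 ≤ k → k < n → R₀ < f (ω k)} ≤ 1 :=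
    iSup₂_le fun x _ => by have := hP.1 x; exact prob_le_one
  have hK (n : ℕ) : ⨆ x ∈ {y | f y ≤ R₀}, P x {ω | ∀ k, 1 ≤ k → k < n + 2 → R₀ < f (ω k)}
      ≤ ∫⁻ z, walkSurvival ζ₁ n z ∂ζ₀ := iSup₂_le fun x (hx : f x ≤ R₀) => by
    simp only [Nat.lt_succ_iff]
    calc P x (staysAbove f R₀ (n + 1)) ≤ ∫⁻ z, walkSurvival ζ₁ n (f x - R₀ + z) ∂ζ₀ :=
          measure_staysAbove_succ_le hP hf (hdom0 x hx) (walkSurvival.monotone n)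
            (walkSurvival.measurable n) (walkSurvival.ne_top n)
            fun y hy => measure_staysAbove_le_walkSurvival hP hf hdom1 n hy
      _ ≤ ∫⁻ z, walkSurvival ζ₁ n z ∂ζ₀ :=
          lintegral_mono fun z => walkSurvival.monotone n (by linarith)
  rw [← ENNReal.summable.sum_add_tsum_nat_add' (k := 2)]
  exact ENNReal.add_lt_top.2
    ⟨ENNReal.sum_lt_top.2 fun n _ => (hle_one n).trans_lt ENNReal.one_lt_top,
      (ENNReal.tsum_le_tsum hK).trans_lt
        (tsum_lintegral_walkSurvival_lt_top (half_pos hlam₁) h1int hc.le h0int)⟩
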